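/- arXiv:1105.2626 — 2 statements merged into one kernel-verified Lean document; each statement's English description precedes it below -/
import Mathlib

section
/- Fix R > 0 and let τ(s) = (1/s²)·(1 − 2·I₁(s·R)/(s·R·I₀(s·R))) for s > 0. Then as s → 0⁺ one has the expansion τ(s) = R²/8 − s²·R⁴/48 + 11·s⁴·R⁶/3072 + O(s⁶); that is, τ(s) − R²/8 + s²·R⁴/48 − 11·s⁴·R⁶/3072 = O(s⁶) as s → 0⁺. -/
/-!
Put `x = sR` and `q(x) = 1 - x²/8 + x⁴/48 - 11x⁶/3072`. For `s > 0`,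
`τ(s) - R²/8 + s²R⁴/48 - 11s⁴R⁶/3072 = (x I₀(x) q(x) - 2 I₁(x)) / (s² x I₀(x))`.
Truncating both Bessel series after four terms, the numerator of the truncations is `O(x⁹)`
(the coefficients of `q` are exactly the ones making this happen), and for `|x| ≤ 1` the tails are
dominated by geometric series with ratio `1/4`. Since `I₀ ≥ 1`, the quotient is at most
`x⁸/s² = R⁸s⁶`.
-/

open Asymptotics

/-- The modified Bessel function of the first kind of order zero. -/
noncomputable def besselI0 (x : ℝ) : ℝ :=
  ∑' k : ℕ, (x / 2) ^ (2 * k) / (Nat.factorial k : ℝ) ^ 2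

/-- The modified Bessel function of the first kind of order one. -/
noncomputable def besselI1 (x : ℝ) : ℝ :=
  ∑' k : ℕ, (x / 2) ^ (2 * k + 1) / ((Nat.factorial k : ℝ) * (Nat.factorial (k + 1) : ℝ))

open Finset Nat

theorem abs_tsum_sub_sum_range_le {c : ℕ → ℝ} (hc : ∀ k, |c k| ≤ 1) {y : ℝ} (hy : |y| < 1)
    (n : ℕ) :
    |∑' k, c k * y ^ k - ∑ k ∈ range n, c k * y ^ k| ≤ |y| ^ n / (1 - |y|) := by
  have hterm (k : ℕ) : ‖c k * y ^ k‖ ≤ |y| ^ k := by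
    rw [Real.norm_eq_abs, abs_mul, abs_pow]
    exact mul_le_of_le_one_left (by positivity) (hc k)
  have hsum : Summable fun k => c k * y ^ k :=
    .of_norm_bounded (summable_geometric_of_lt_one (abs_nonneg y) hy) hterm
  rw [← hsum.sum_add_tsum_nat_add n, add_sub_cancel_left, ← Real.norm_eq_abs, div_eq_mul_inv]
  refine tsum_of_norm_bounded ((hasSum_geometric_of_lt_one (abs_nonneg y) hy).mul_left _)
    fun k => ?_
  rw [← pow_add, add_comm n k]
  exact hterm _

theorem besselI0_eq_tsum (x : ℝ) :
    besselI0 x = ∑' k, ((k ! : ℝ) ^ 2)⁻¹ * ((x / 2) ^ 2) ^ k := by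
  simp only [besselI0, pow_mul, div_eq_inv_mul]

theorem besselI1_eq_mul_tsum (x : ℝ) :
    besselI1 x = x / 2 * ∑' k, ((k ! : ℝ) * (k + 1)!)⁻¹ * ((x / 2) ^ 2) ^ k := by
  rw [besselI1, ← tsum_mul_left]
  congr 1 with k
  rw [pow_succ, pow_mul]
  ring

theorem abs_inv_factorial_mul_le_one (m n : ℕ) : |((m ! : ℝ) * n !)⁻¹| ≤ 1 := by
  have h : (1 : ℝ) ≤ m ! * n ! := by exact_mod_cast Nat.mul_pos m.factorial_pos n.factorial_pos
  rw [abs_inv, abs_of_pos (by linarith)]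
  exact inv_le_one_of_one_le₀ h

theorem abs_tsum_sub_sum_range_four_le {x : ℝ} (hx : |x| ≤ 1) {c : ℕ → ℝ} (hc : ∀ k, |c k| ≤ 1) :
    |∑' k, c k * ((x / 2) ^ 2) ^ k - ∑ k ∈ range 4, c k * ((x / 2) ^ 2) ^ k| ≤ x ^ 8 / 192 := by
  have hx2 : x ^ 2 ≤ 1 := (sq_le_one_iff_abs_le_one x).2 hx
  have hy : |(x / 2) ^ 2| = x ^ 2 / 4 := by rw [abs_of_nonneg (sq_nonneg _)]; ring
  calc _ ≤ |(x / 2) ^ 2| ^ 4 / (1 - |(x / 2) ^ 2|) :=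
        abs_tsum_sub_sum_range_le hc (by rw [hy]; linarith) 4
    _ ≤ x ^ 8 / 192 := by
        rw [hy, div_le_iff₀ (by linarith)]
        nlinarith [pow_nonneg (sq_nonneg x) 4]

theorem abs_besselI0_sub_le {x : ℝ} (hx : |x| ≤ 1) :
    |besselI0 x - (1 + x ^ 2 / 4 + x ^ 4 / 64 + x ^ 6 / 2304)| ≤ x ^ 8 / 192 := by
  have h := abs_tsum_sub_sum_range_four_le hx (c := fun k => ((k ! : ℝ) ^ 2)⁻¹)
    fun k => by rw [sq]; exact abs_inv_factorial_mul_le_one k k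
  have hp : ∑ k ∈ range 4, ((k ! : ℝ) ^ 2)⁻¹ * ((x / 2) ^ 2) ^ k
      = 1 + x ^ 2 / 4 + x ^ 4 / 64 + x ^ 6 / 2304 := by
    simp [sum_range_succ, factorial]; ring
  rwa [← besselI0_eq_tsum, hp] at h

theorem abs_besselI1_sub_le {x : ℝ} (hx : |x| ≤ 1) :
    |besselI1 x - (x / 2 + x ^ 3 / 16 + x ^ 5 / 384 + x ^ 7 / 18432)| ≤ |x| ^ 9 / 384 := by
  have h := abs_tsum_sub_sum_range_four_le hx (c := fun k => ((k ! : ℝ) * (k + 1)!)⁻¹)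
    fun k => abs_inv_factorial_mul_le_one k (k + 1)
  have hp : ∑ k ∈ range 4, ((k ! : ℝ) * (k + 1)!)⁻¹ * ((x / 2) ^ 2) ^ k
      = 1 + x ^ 2 / 8 + x ^ 4 / 192 + x ^ 6 / 9216 := by
    simp [sum_range_succ, factorial]; ring
  rw [hp] at h
  calc _ = |x / 2| * |∑' k, ((k ! : ℝ) * (k + 1)!)⁻¹ * ((x / 2) ^ 2) ^ k
          - (1 + x ^ 2 / 8 + x ^ 4 / 192 + x ^ 6 / 9216)| := by
        rw [← abs_mul, besselI1_eq_mul_tsum]; ring_nf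
    _ ≤ |x| / 2 * (x ^ 8 / 192) := by rw [abs_div, abs_two]; gcongr
    _ = |x| ^ 9 / 384 := by rw [← (by decide : Even 8).pow_abs]; ring

theorem one_le_besselI0 (x : ℝ) : 1 ≤ besselI0 x := by
  have hsum : Summable fun k => ((k ! : ℝ) ^ 2)⁻¹ * ((x / 2) ^ 2) ^ k := by
    refine (Real.summable_pow_div_factorial ((x / 2) ^ 2)).of_nonneg_of_le
      (fun k => by positivity) fun k => ?_
    rw [inv_mul_eq_div]
    have : (k ! : ℝ) ≤ k ! ^ 2 := le_self_pow₀ (by exact_mod_cast k.factorial_pos) two_ne_zero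
    gcongr
  rw [besselI0_eq_tsum]
  simpa using hsum.le_tsum 0 fun k _ => by positivity

theorem abs_mul_besselI0_mul_sub_besselI1_le {x : ℝ} (hx : |x| ≤ 1) :
    |x * besselI0 x * (1 - x ^ 2 / 8 + x ^ 4 / 48 - 11 * x ^ 6 / 3072) - 2 * besselI1 x|
      ≤ |x| ^ 9 := by
  have h0 := abs_besselI0_sub_le hx
  have h1 := abs_besselI1_sub_le hx
  have hx2 : x ^ 2 ≤ 1 := (sq_le_one_iff_abs_le_one x).2 hx
  have hq : |1 - x ^ 2 / 8 + x ^ 4 / 48 - 11 * x ^ 6 / 3072| ≤ 1 := by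
    rw [abs_le]; constructor <;>
      nlinarith [sq_nonneg x, sq_nonneg (x ^ 2), mul_nonneg (sq_nonneg x) (sq_nonneg (x ^ 2))]
  have hr : |-23 / 36864 - 83 / 1769472 * x ^ 2 - 11 / 7077888 * x ^ 4| ≤ 1 / 100 := by
    rw [abs_le]; constructor <;> nlinarith [sq_nonneg x, sq_nonneg (x ^ 2)]
  have hx8 : x ^ 8 = |x| ^ 8 := ((by decide : Even 8).pow_abs x).symm
  -- the truncated series contribute `x p₀ q - 2 p₁ = x⁹ · (-23/36864 - …)`
  calc _ = |x * (1 - x ^ 2 / 8 + x ^ 4 / 48 - 11 * x ^ 6 / 3072)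
          * (besselI0 x - (1 + x ^ 2 / 4 + x ^ 4 / 64 + x ^ 6 / 2304))
        - 2 * (besselI1 x - (x / 2 + x ^ 3 / 16 + x ^ 5 / 384 + x ^ 7 / 18432))
        + x ^ 9 * (-23 / 36864 - 83 / 1769472 * x ^ 2 - 11 / 7077888 * x ^ 4)| := by
        ring_nf
    _ ≤ |x| * 1 * (x ^ 8 / 192) + 2 * (|x| ^ 9 / 384) + |x| ^ 9 * (1 / 100) := by
        refine (abs_add_le _ _).trans (add_le_add ((abs_sub _ _).trans (add_le_add ?_ ?_)) ?_)
        · rw [abs_mul, abs_mul]; gcongr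
        · rw [abs_mul, abs_two]; gcongr
        · rw [abs_mul, abs_pow]; gcongr
    _ ≤ |x| ^ 9 := by
        have := pow_nonneg (abs_nonneg x) 9
        rw [hx8]; ring_nf; linarith

/-- Small-`s` expansion of `τ(s) = (1/s²)(1 − 2 I₁(sR)/(sR I₀(sR)))`:
`τ(s) = R²/8 − s²R⁴/48 + 11 s⁴R⁶/3072 + O(s⁶)` as `s → 0⁺`. -/
theorem disk_laplace_survival_small_s_expansion (R : ℝ) (hR : 0 < R)
    (τ : ℝ → ℝ)
    (hτ : ∀ s : ℝ, 0 < s →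
      τ s = 1 / s ^ 2 * (1 - 2 * besselI1 (s * R) / (s * R * besselI0 (s * R)))) :
    (fun s : ℝ => τ s - R ^ 2 / 8 + s ^ 2 * R ^ 4 / 48 - 11 * s ^ 4 * R ^ 6 / 3072)
      =O[nhdsWithin 0 (Set.Ioi 0)] fun s : ℝ => s ^ 6 := by
  refine isBigO_iff.2 ⟨R ^ 8, ?_⟩
  filter_upwards [Ioo_mem_nhdsGT (one_div_pos.2 hR)] with s ⟨hs0, hs1⟩
  have hx : |s * R| ≤ 1 := by
    rw [abs_of_pos (by positivity)]; exact ((lt_div_iff₀ hR).1 hs1).le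
  have hI0 := one_le_besselI0 (s * R)
  have hrepr : τ s - R ^ 2 / 8 + s ^ 2 * R ^ 4 / 48 - 11 * s ^ 4 * R ^ 6 / 3072
      = (s * R * besselI0 (s * R) * (1 - (s * R) ^ 2 / 8 + (s * R) ^ 4 / 48
          - 11 * (s * R) ^ 6 / 3072) - 2 * besselI1 (s * R))
        / (s ^ 2 * (s * R * besselI0 (s * R))) := by
    rw [hτ s hs0]; field_simp; ring
  rw [hrepr, Real.norm_eq_abs, Real.norm_eq_abs, abs_div, div_le_iff₀ (by positivity)]
  calc _ ≤ |s * R| ^ 9 := abs_mul_besselI0_mul_sub_besselI1_le hx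
    _ = R ^ 8 * s ^ 6 * (s ^ 2 * (s * R * 1)) := by rw [abs_of_pos (by positivity)]; ring
    _ ≤ R ^ 8 * |s ^ 6| * |s ^ 2 * (s * R * besselI0 (s * R))| := by
        rw [abs_of_pos (by positivity), abs_of_pos (by positivity)]; gcongr
end

section
/- The modified Bessel function I₀ has the leading large-argument asymptotics I₀(x) ~ eˣ/√(2πx); that is, lim_{x→+∞} √(2πx)·e^{−x}·I₀(x) = 1. -/
/-!
Term-by-term integration of the exponential series gives Poisson's formula
`π I₀(x) = ∫₀^π e^{x cos θ} dθ`, so `√x e^{-x} π I₀(x) = ∫₀^{π√x} e^{-x(1 - cos(t/√x))} dt` after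
substituting `θ = t/√x`. The exponent tends to `t²/2` pointwise, and `cos u ≤ 1 - 2u²/π²` on
`[-π, π]` bounds the integrand by the Gaussian `e^{-2t²/π²}`, so dominated convergence gives
`√x e^{-x} π I₀(x) → ∫₀^∞ e^{-t²/2} dt = √(2π)/2`.
-/

open Filter

open Real MeasureTheory Set Topology Nat

lemma summable_besselI0_term (x : ℝ) :
    Summable fun k : ℕ => (x / 2) ^ (2 * k) / (k ! : ℝ) ^ 2 := by
  refine (summable_pow_div_factorial ((x / 2) ^ 2)).of_nonneg_of_le
    (fun k => by rw [pow_mul]; positivity) fun k => ?_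
  rw [pow_mul]
  exact div_le_div_of_nonneg_left (by positivity) (by positivity)
    (le_self_pow₀ (Nat.one_le_cast.2 k.factorial_pos) two_ne_zero)

lemma integral_cos_pow_two_mul (k : ℕ) :
    ∫ θ in (0 : ℝ)..π, cos θ ^ (2 * k) = π * (2 * k)! / (4 ^ k * (k ! : ℝ) ^ 2) := by
  induction k with
  | zero => simp
  | succ k ih =>
    rw [show 2 * (k + 1) = 2 * k + 2 by ring, integral_cos_pow, ih, factorial_succ,
      factorial_succ, factorial_succ]
    simp only [sin_pi, sin_zero, mul_zero, sub_zero, zero_div, zero_add]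
    push_cast
    field_simp
    ring

lemma integral_cos_pow_two_mul_add_one (k : ℕ) :
    ∫ θ in (0 : ℝ)..π, cos θ ^ (2 * k + 1) = 0 := by
  induction k with
  | zero => simp
  | succ k ih =>
    rw [show 2 * (k + 1) + 1 = 2 * k + 1 + 2 by ring, integral_cos_pow, ih]
    simp

lemma hasSum_integral_exp_mul_cos (x : ℝ) :
    HasSum (fun n : ℕ => x ^ n / n ! * ∫ θ in (0 : ℝ)..π, cos θ ^ n)
      (∫ θ in (0 : ℝ)..π, exp (x * cos θ)) := by
  have hterm (n : ℕ) : ∫ θ in (0 : ℝ)..π, (x * cos θ) ^ n / n ! =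
      x ^ n / n ! * ∫ θ in (0 : ℝ)..π, cos θ ^ n := by
    rw [← intervalIntegral.integral_const_mul]
    congr 1 with θ
    ring
  simp_rw [← hterm]
  refine intervalIntegral.hasSum_integral_of_dominated_convergence (fun n _ => |x| ^ n / n !)
    (fun n => (by fun_prop : Continuous _).aestronglyMeasurable)
    (fun n => ae_of_all _ fun θ _ => ?_)
    (ae_of_all _ fun _ _ => summable_pow_div_factorial |x|) intervalIntegrable_const
    (ae_of_all _ fun θ _ => ?_)
  · rw [norm_div, norm_pow, norm_mul, Real.norm_natCast, Real.norm_eq_abs, Real.norm_eq_abs]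
    gcongr
    exact mul_le_of_le_one_right (abs_nonneg x) (abs_cos_le_one θ)
  · rw [exp_eq_exp_ℝ]
    exact NormedSpace.expSeries_div_hasSum_exp _

theorem integral_exp_mul_cos_eq_pi_mul_besselI0 (x : ℝ) :
    ∫ θ in (0 : ℝ)..π, exp (x * cos θ) = π * besselI0 x := by
  refine (hasSum_integral_exp_mul_cos x).unique ?_
  have heven (k : ℕ) : x ^ (2 * k) / (2 * k)! * ∫ θ in (0 : ℝ)..π, cos θ ^ (2 * k) =
      π * ((x / 2) ^ (2 * k) / (k ! : ℝ) ^ 2) := by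
    rw [integral_cos_pow_two_mul, div_pow, pow_mul 2, show (2 : ℝ) ^ 2 = 4 by norm_num]
    field_simp
  have hodd (k : ℕ) :
      x ^ (2 * k + 1) / (2 * k + 1)! * ∫ θ in (0 : ℝ)..π, cos θ ^ (2 * k + 1) = 0 := by
    rw [integral_cos_pow_two_mul_add_one, mul_zero]
  have h := HasSum.even_add_odd
    (f := fun n : ℕ => x ^ n / n ! * ∫ θ in (0 : ℝ)..π, cos θ ^ n) (m := π * besselI0 x) (m' := 0)
    ?_ ?_
  · rwa [add_zero] at h
  · simp only [heven]
    exact (summable_besselI0_term x).hasSum.mul_left π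
  · simp only [hodd]
    exact hasSum_zero

theorem intervalIntegral_tendsto_integral_Ioi_of_dominated {ι E : Type*}
    [NormedAddCommGroup E] [NormedSpace ℝ E] {l : Filter ι} [l.IsCountablyGenerated]
    {F : ι → ℝ → E} {f : ℝ → E} {g : ℝ → ℝ} {b : ι → ℝ} (hb : Tendsto b l atTop)
    (hF_meas : ∀ᶠ i in l, AEStronglyMeasurable (F i) (volume.restrict (Ioi 0)))
    (h_bound : ∀ᶠ i in l, ∀ t ∈ Ioc 0 (b i), ‖F i t‖ ≤ g t)
    (hg : IntegrableOn g (Ioi 0))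
    (h_lim : ∀ t > 0, Tendsto (fun i => F i t) l (𝓝 (f t))) :
    Tendsto (fun i => ∫ t in (0 : ℝ)..b i, F i t) l (𝓝 (∫ t in Ioi 0, f t)) := by
  have h_indicator : ∀ᶠ i in l,
      ∫ t in Ioi 0, (Ioc 0 (b i)).indicator (F i) t = ∫ t in (0 : ℝ)..b i, F i t := by
    filter_upwards [hb.eventually_ge_atTop 0] with i hi
    rw [intervalIntegral.integral_of_le hi, integral_indicator measurableSet_Ioc,
      Measure.restrict_restrict measurableSet_Ioc, inter_eq_left.2 Ioc_subset_Ioi_self]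
  refine (tendsto_integral_filter_of_dominated_convergence (fun t => ‖g t‖) ?_ ?_ hg.norm
    ?_).congr' h_indicator
  · filter_upwards [hF_meas] with i hi using hi.indicator measurableSet_Ioc
  · filter_upwards [h_bound] with i hi
    refine ae_of_all _ fun t => ?_
    by_cases ht : t ∈ Ioc 0 (b i)
    · rw [indicator_of_mem ht]
      exact (hi t ht).trans (le_abs_self _)
    · rw [indicator_of_notMem ht, norm_zero]
      exact norm_nonneg _
  · refine (ae_restrict_iff' measurableSet_Ioi).2 (ae_of_all _ fun t ht => (h_lim t ht).congr' ?_)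
    filter_upwards [hb.eventually_ge_atTop t] with i hi
    rw [indicator_of_mem (show t ∈ Ioc 0 (b i) from ⟨ht, hi⟩)]

lemma two_div_pi_sq_mul_sq_le_mul_one_sub_cos {x t : ℝ} (hx : 0 < x) (ht : |t| ≤ π * √x) :
    2 / π ^ 2 * t ^ 2 ≤ x * (1 - cos (t / √x)) := by
  have hs : 0 < √x := sqrt_pos.2 hx
  have hcos := cos_le_one_sub_mul_cos_sq (x := t / √x)
    (by rwa [abs_div, abs_of_pos hs, div_le_iff₀ hs])
  calc 2 / π ^ 2 * t ^ 2 = x * (2 / π ^ 2 * (t / √x) ^ 2) := by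
        rw [div_pow, sq_sqrt hx.le]
        field_simp
    _ ≤ x * (1 - cos (t / √x)) := by gcongr; linarith

lemma one_sub_cos_eq_sq_mul_sinc_sq (y : ℝ) : 1 - cos y = y ^ 2 / 2 * sinc (y / 2) ^ 2 := by
  rcases eq_or_ne y 0 with rfl | hy
  · simp
  have h_half := sin_sq_eq_half_sub (y / 2)
  rw [mul_div_cancel₀ _ two_ne_zero] at h_half
  rw [sinc_of_ne_zero (div_ne_zero hy two_ne_zero), div_pow, h_half]
  field_simp

lemma tendsto_mul_one_sub_cos_div_sqrt (t : ℝ) :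
    Tendsto (fun x => x * (1 - cos (t / √x))) atTop (𝓝 (t ^ 2 / 2)) := by
  have h_arg : Tendsto (fun x => t / √x / 2) atTop (𝓝 0) := by
    simpa using (tendsto_const_nhds.div_atTop tendsto_sqrt_atTop).div_const 2
  have h := (((continuous_sinc.tendsto 0).comp h_arg).pow 2).const_mul (t ^ 2 / 2)
  rw [sinc_zero, one_pow, mul_one] at h
  refine h.congr' ?_
  filter_upwards [eventually_gt_atTop 0] with x hx
  rw [Function.comp_apply, one_sub_cos_eq_sq_mul_sinc_sq, div_pow, sq_sqrt hx.le]
  field_simp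

lemma integral_exp_neg_sq_div_two_Ioi : ∫ t in Ioi 0, exp (-(t ^ 2 / 2)) = √(2 * π) / 2 := by
  rw [show 2 * π = π / (1 / 2) by field_simp, ← integral_gaussian_Ioi]
  congr 1 with t
  ring_nf

lemma tendsto_integral_exp_neg_mul_one_sub_cos_div_sqrt :
    Tendsto (fun x => ∫ t in (0 : ℝ)..π * √x, exp (-(x * (1 - cos (t / √x))))) atTop
      (𝓝 (√(2 * π) / 2)) := by
  rw [← integral_exp_neg_sq_div_two_Ioi]
  refine intervalIntegral_tendsto_integral_Ioi_of_dominated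
    (g := fun t => exp (-(2 / π ^ 2) * t ^ 2))
    (tendsto_sqrt_atTop.const_mul_atTop pi_pos)
    (Eventually.of_forall fun x => (by fun_prop : Continuous _).aestronglyMeasurable) ?_
    (integrableOn_Ioi_exp_neg_mul_sq_iff.2 (by positivity))
    fun t _ => (continuous_exp.tendsto _).comp (tendsto_mul_one_sub_cos_div_sqrt t).neg
  filter_upwards [eventually_gt_atTop 0] with x hx t ht
  rw [norm_of_nonneg (exp_pos _).le, exp_le_exp, neg_mul, neg_le_neg_iff]
  exact two_div_pi_sq_mul_sq_le_mul_one_sub_cos hx (by rw [abs_of_pos ht.1]; exact ht.2)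

lemma integral_exp_neg_mul_one_sub_cos_div_sqrt {x : ℝ} (hx : 0 < x) :
    ∫ t in (0 : ℝ)..π * √x, exp (-(x * (1 - cos (t / √x)))) = π * √x * exp (-x) * besselI0 x := by
  have hs : 0 < √x := sqrt_pos.2 hx
  rw [intervalIntegral.integral_comp_div (fun θ => exp (-(x * (1 - cos θ)))) hs.ne', zero_div,
    mul_div_cancel_right₀ _ hs.ne', smul_eq_mul]
  have h_exp (θ : ℝ) : exp (-(x * (1 - cos θ))) = exp (-x) * exp (x * cos θ) := by
    rw [← exp_add]
    ring_nf
  simp_rw [h_exp]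
  rw [intervalIntegral.integral_const_mul, integral_exp_mul_cos_eq_pi_mul_besselI0]
  ring

/-- Leading large-argument asymptotics `I₀(x) ~ eˣ/√(2πx)`, i.e.
`lim_{x→+∞} √(2πx)·e^{−x}·I₀(x) = 1`. -/
theorem besselI0_asymptotics :
    Tendsto (fun x : ℝ => Real.sqrt (2 * Real.pi * x) * Real.exp (-x) * besselI0 x)
      atTop (nhds 1) := by
  have h := tendsto_integral_exp_neg_mul_one_sub_cos_div_sqrt.const_mul (√(2 * π) / π)
  rw [show √(2 * π) / π * (√(2 * π) / 2) = 1 by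
    field_simp; exact sq_sqrt (by positivity)] at h
  refine h.congr' ?_
  filter_upwards [eventually_gt_atTop 0] with x hx
  rw [integral_exp_neg_mul_one_sub_cos_div_sqrt hx, sqrt_mul (by positivity : 0 ≤ 2 * π) x]
  field_simp
end
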